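/- arXiv:2401.01890 — 2 statements merged into one kernel-verified Lean document; each statement's English description precedes it below -/
import Mathlib

section
/- The element M_t is primitive for the coproduct Δ (i.e. the reduced coproduct vanishes on M_t) if and only if t is ⋋-irreducible, for any planar binary rooted tree t. -/
open Classical

/-- Planar binary rooted trees. `leaf` is the unique tree `|` with one leaf. -/
inductive PBT : Type
  | leaf : PBT
  | node : PBT → PBT → PBT
  deriving DecidableEq

/-- Number of leaves of a planar binary rooted tree. -/
def leavesCount : PBT → ℕ
  | .leaf => 1
  | .node l r => leavesCount l + leavesCount r

/-- Graft the tree `w` onto the leftmost (first) leaf of `t`. -/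
def graft1 : PBT → PBT → PBT
  | .leaf, w => w
  | .node l r, w => .node (graft1 l w) r

/-- The product `t ⋋ w := w ∘₁ (t ∨ |)`. -/
def lprod (t w : PBT) : PBT := graft1 w (.node t .leaf)

/-- A tree is `⋋`-irreducible if it is not a product of two (nonempty) trees. -/
def Irr (t : PBT) : Prop := ¬ ∃ u w : PBT, t = lprod u w

/-- One covering move of the Tamari order: a right rotation
`(a ∨ b) ∨ c ↦ a ∨ (b ∨ c)` applied at some internal node. -/
inductive TStep : PBT → PBT → Prop
  | rot (a b c : PBT) : TStep (.node (.node a b) c) (.node a (.node b c))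
  | left {a a' : PBT} (c : PBT) : TStep a a' → TStep (.node a c) (.node a' c)
  | right (a : PBT) {c c' : PBT} : TStep c c' → TStep (.node a c) (.node a c')

/-- The Tamari order on planar binary rooted trees: the reflexive transitive
closure of the rotation moves. -/
def tle : PBT → PBT → Prop := Relation.ReflTransGen TStep

/-- `∨` extended to trees-with-unit, the unit (`none`) acting as a unit. -/
def ovee : Option PBT → Option PBT → Option PBT
  | none, b => b
  | a, none => a
  | some t, some w => some (PBT.node t w)

/-- The coproduct on trees (with values in the free module on pairs of
trees-with-unit): `Δ(t ∨ w) = Σ t₍₁₎ ⊗ (t₍₂₎ ∨ w) + Σ (t ∨ w₍₁₎) ⊗ w₍₂₎ − t ⊗ w`. -/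
noncomputable def D0 : PBT → ((Option PBT × Option PBT) →₀ ℤ)
  | .leaf =>
      Finsupp.single (none, some PBT.leaf) 1 + Finsupp.single (some PBT.leaf, none) 1
  | .node t w =>
      ((D0 t).sum fun p a => a • Finsupp.single (p.1, ovee p.2 (some w)) 1) +
      ((D0 w).sum fun p a => a • Finsupp.single (ovee (some t) p.1, p.2) 1) -
      Finsupp.single (some t, some w) 1

/-- The coproduct `Δ` on the vector space spanned by trees and the unit:
`Δ(1) = 1 ⊗ 1` and on trees it is given by `D0`. -/
noncomputable def D : Option PBT → ((Option PBT × Option PBT) →₀ ℤ)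
  | none => Finsupp.single (none, none) 1
  | some t => D0 t

/-- The linear extension of the coproduct `Δ`. -/
noncomputable def Dhat (f : Option PBT →₀ ℤ) : (Option PBT × Option PBT) →₀ ℤ :=
  f.sum fun x a => a • D x

/-!
Write `Δ(s) = Σᵢ cut s i` as the sum over all gaps `i` of the splittings of `s` along the
path from the root to that gap, so that the reduced coproduct of `M_t` has coefficient
`ν(u, w) = Σ_{s ≤ t, cut s |u| = (u, w)} μ(s, t)` at `u ⊗ w`. Cutting at a fixed gap is
monotone for the Tamari order, and `u ⋋ w ≤ s` exactly when the cut of `s` after `|u|` leaves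
dominates `(u, w)`. Summing `ν` over the upper set of `(u, w)` therefore gives
`Σ_{u ⋋ w ≤ s ≤ t} μ(s, t)`, which is `1` if `t = u ⋋ w` and `0` otherwise. If `t = u ⋋ w`,
this forces `ν ≠ 0`; if `t` is irreducible, all upper sums of `ν` vanish, hence `ν = 0` by
downward induction.
-/

open Finset in
theorem eq_zero_of_forall_sum_Ici_eq_zero {α M : Type*} [PartialOrder α]
    [LocallyFiniteOrderTop α] [AddCommMonoid M] {f : α → M}
    (h : ∀ a, ∑ x ∈ Ici a, f x = 0) (a : α) : f a = 0 := by
  have hIoi : ∀ x ∈ Ioi a, f x = 0 := fun x hx =>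
    have : #(Ici x) < #(Ici a) := card_lt_card (Ici_ssubset_Ici.2 (mem_Ioi.1 hx))
    eq_zero_of_forall_sum_Ici_eq_zero h x
  calc f a = f a + ∑ x ∈ Ioi a, f x := by rw [sum_eq_zero hIoi, add_zero]
    _ = 0 := by rw [add_sum_Ioi_eq_sum_Ici, h]
termination_by #(Ici a)

lemma Finsupp.sum_smul_single_one_eq_mapDomain {α β R : Type*} [Semiring R] (φ : α → β)
    (f : α →₀ R) : (f.sum fun p a => a • single (φ p) (1 : R)) = mapDomain φ f :=
  Finsupp.sum_congr fun _ _ => smul_single_one _ _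

section Mobius

open Finset

variable {α R : Type*} [PartialOrder α] [LocallyFiniteOrder α] [DecidableEq α]
  [AddCommMonoidWithOne R] {μ : α → α → R}

lemma sum_Icc_eq_ite_of_mobius (hμrefl : ∀ t, μ t t = 1)
    (hμsum : ∀ w t, w ≤ t → w ≠ t →
      (∑ᶠ z, if w ≤ z ∧ z ≤ t then μ z t else 0) = 0)
    (x t : α) : ∑ z ∈ Icc x t, μ z t = if x = t then 1 else 0 := by
  split_ifs with hxt
  · rw [hxt, Icc_self, sum_singleton, hμrefl]
  by_cases hle : x ≤ t
  · rw [← hμsum x t hle hxt, finsum_eq_sum_of_support_subset (s := Icc x t)]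
    · exact sum_congr rfl fun z hz => (if_pos (mem_Icc.1 hz)).symm
    · intro z hz
      by_contra hz'
      exact hz (if_neg (fun h => hz' (coe_Icc x t ▸ h)))
  · rw [Icc_eq_empty hle, sum_empty]

lemma sum_ite_le_eq_ite_of_mobius (hμrefl : ∀ t, μ t t = 1)
    (hμzero : ∀ w t, ¬ w ≤ t → μ w t = 0)
    (hμsum : ∀ w t, w ≤ t → w ≠ t →
      (∑ᶠ z, if w ≤ z ∧ z ≤ t then μ z t else 0) = 0)
    {t : α} (v : α →₀ R) (hv : ∀ s, v s = μ s t) (x : α) :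
    (v.sum fun s a => if x ≤ s then a else 0) = if x = t then 1 else 0 := by
  have hsupp : ∀ s ∈ v.support, s ≤ t := fun s hs => by
    by_contra h
    exact Finsupp.mem_support_iff.1 hs ((hv s).trans (hμzero s t h))
  calc (v.sum fun s a => if x ≤ s then a else 0)
      = ∑ s ∈ v.support with x ≤ s, v s := (sum_filter _ _).symm
    _ = ∑ s ∈ Icc x t, v s := by
      refine sum_subset (fun s hs => ?_) fun s hst hs => ?_
      · obtain ⟨hs, hxs⟩ := mem_filter.1 hs
        exact mem_Icc.2 ⟨hxs, hsupp s hs⟩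
      · by_contra h
        exact hs (mem_filter.2 ⟨Finsupp.mem_support_iff.2 h, (mem_Icc.1 hst).1⟩)
    _ = if x = t then 1 else 0 := by
      simp only [hv]
      exact sum_Icc_eq_ite_of_mobius hμrefl hμsum x t

end Mobius

section Order

open PBT

lemma one_le_leavesCount (s : PBT) : 1 ≤ leavesCount s := by
  induction s with
  | leaf => rfl
  | node a b _ _ => exact le_add_right ‹1 ≤ leavesCount a›

lemma TStep.leavesCount_eq {s s' : PBT} (h : TStep s s') : leavesCount s = leavesCount s' := by
  induction h with
  | rot => simp only [leavesCount]; ring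
  | left c _ ih | right a _ ih => simp only [leavesCount, ih]

def PBT.rotationRank : PBT → ℕ
  | leaf => 0
  | node a b => rotationRank a + rotationRank b + leavesCount b

lemma TStep.rotationRank_lt {s s' : PBT} (h : TStep s s') : rotationRank s < rotationRank s' := by
  induction h with
  | rot a b c => simp only [rotationRank, leavesCount]; have := one_le_leavesCount c; omega
  | left c _ ih => simp only [rotationRank]; omega
  | right a h ih => simp only [rotationRank, h.leavesCount_eq]; omega

instance : PartialOrder PBT where
  le := tle
  le_refl _ := Relation.ReflTransGen.refl
  le_trans _ _ _ := Relation.ReflTransGen.trans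
  le_antisymm s t hst hts := by
    have rank_le : ∀ {s t : PBT}, tle s t → rotationRank s ≤ rotationRank t := fun h =>
      Relation.ReflTransGen.head_induction_on h le_rfl fun h _ ih => h.rotationRank_lt.le.trans ih
    rcases Relation.ReflTransGen.cases_head hst with rfl | ⟨u, hsu, hut⟩
    · rfl
    · exact absurd (hsu.rotationRank_lt.trans_le ((rank_le hut).trans (rank_le hts))) (lt_irrefl _)

lemma TStep.le {s s' : PBT} (h : TStep s s') : s ≤ s' := Relation.ReflTransGen.single h

lemma leavesCount_eq_of_le {s s' : PBT} (h : s ≤ s') : leavesCount s = leavesCount s' :=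
  Relation.ReflTransGen.rec rfl (fun _ hstep ih => ih.trans hstep.leavesCount_eq) h

lemma PBT.node_le_node {a a' c c' : PBT} (ha : a ≤ a') (hc : c ≤ c') :
    node a c ≤ node a' c' :=
  le_trans (Relation.ReflTransGen.lift (node · c) (fun _ _ => TStep.left c) _ _ ha)
    (Relation.ReflTransGen.lift (node a' ·) (fun _ _ => TStep.right a') _ _ hc)

lemma PBT.finite_setOf_leavesCount_eq (n : ℕ) : {s | leavesCount s = n}.Finite := by
  induction n using Nat.strong_induction_on with
  | _ n ih =>
  refine ((Set.finite_singleton leaf).union ((Set.finite_Ioo 0 n).biUnion fun k hk =>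
    (ih k hk.2).image2 node (ih (n - k) (by grind)))).subset ?_
  rintro (_ | ⟨a, b⟩) hs
  · exact Or.inl rfl
  · have := one_le_leavesCount a
    have := one_le_leavesCount b
    simp only [Set.mem_ofPred_eq, leavesCount] at hs
    exact Or.inr (Set.mem_biUnion (x := leavesCount a) ⟨by omega, by omega⟩
      (Set.mem_image2_of_mem rfl (show leavesCount b = n - leavesCount a by omega)))

noncomputable instance : LocallyFiniteOrder PBT :=
  LocallyFiniteOrder.ofFiniteIcc fun a _ =>
    (finite_setOf_leavesCount_eq (leavesCount a)).subset fun _ hs =>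
      (leavesCount_eq_of_le hs.1).symm

noncomputable instance : LocallyFiniteOrderTop PBT :=
  LocallyFiniteOrderTop.ofIci' PBT
    (fun a => {s ∈ (finite_setOf_leavesCount_eq (leavesCount a)).toFinset | a ≤ s})
    fun a s => by
      simp only [Finset.mem_filter, Set.Finite.mem_toFinset, Set.mem_ofPred_eq,
        and_iff_right_iff_imp]
      exact fun h => (leavesCount_eq_of_le h).symm

end Order

section Cut

open PBT

lemma leavesCount_lprod (u w : PBT) : leavesCount (lprod u w) = leavesCount u + leavesCount w := by
  induction w with
  | leaf => rfl
  | node x y ih => change leavesCount (lprod u x) + _ = _; simp only [ih, leavesCount]; ring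

lemma lprod_mono_left {u u' : PBT} (h : u ≤ u') (w : PBT) : lprod u w ≤ lprod u' w := by
  induction w with
  | leaf => exact node_le_node h le_rfl
  | node x y ih => exact node_le_node ih le_rfl

lemma TStep.lprod_right (u : PBT) {w w' : PBT} (h : TStep w w') :
    TStep (lprod u w) (lprod u w') := by
  induction h with
  | rot a b c => exact TStep.rot (lprod u a) b c
  | left c _ ih => exact TStep.left c ih
  | right a h _ => exact TStep.right (lprod u a) h

lemma lprod_mono {u u' w w' : PBT} (hu : u ≤ u') (hw : w ≤ w') : lprod u w ≤ lprod u' w' :=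
  (lprod_mono_left hu w).trans
    (Relation.ReflTransGen.lift (lprod u') (fun _ _ => TStep.lprod_right u') _ _ hw)

lemma lprod_le_node (a c : PBT) : lprod a c ≤ node a c := by
  induction c with
  | leaf => rfl
  | node x y ih => exact (node_le_node ih le_rfl).trans (TStep.rot a x y).le

lemma lprod_node_left_le (a x w : PBT) : lprod (node a x) w ≤ node a (lprod x w) := by
  induction w with
  | leaf => exact (TStep.rot a x leaf).le
  | node w₁ w₂ ih => exact (node_le_node ih le_rfl).trans (TStep.rot a (lprod x w₁) w₂).le

/-- `cut s i` splits `s` along the path from the root to the gap between its `i`-th and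
`(i+1)`-th leaves; `none` stands for the empty tree `1`. -/
def PBT.cut : PBT → ℕ → Option PBT × Option PBT
  | leaf, 0 => (none, some leaf)
  | leaf, _ + 1 => (some leaf, none)
  | node a b, i =>
    if i ≤ leavesCount a then ((cut a i).1, ovee (cut a i).2 (some b))
    else (ovee (some a) (cut b (i - leavesCount a)).1, (cut b (i - leavesCount a)).2)

lemma cut_node_of_le {a : PBT} (b : PBT) {i : ℕ} (h : i ≤ leavesCount a) :
    (node a b).cut i = ((a.cut i).1, ovee (a.cut i).2 (some b)) := by
  rw [cut, if_pos h]

lemma cut_node_of_lt {a : PBT} (b : PBT) {i : ℕ} (h : leavesCount a < i) :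
    (node a b).cut i =
      (ovee (some a) (b.cut (i - leavesCount a)).1, (b.cut (i - leavesCount a)).2) := by
  rw [cut, if_neg h.not_ge]

lemma cut_zero (s : PBT) : s.cut 0 = (none, some s) := by
  induction s with
  | leaf => rfl
  | node a b ih _ => rw [cut_node_of_le b (Nat.zero_le _), ih]; rfl

lemma cut_leavesCount (s : PBT) : s.cut (leavesCount s) = (some s, none) := by
  induction s with
  | leaf => rfl
  | node a b _ ih =>
    have := one_le_leavesCount b
    rw [cut_node_of_lt b (by simp only [leavesCount]; omega)]
    simp only [leavesCount, Nat.add_sub_cancel_left, ih]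
    rfl

lemma cut_lprod (u w : PBT) : (lprod u w).cut (leavesCount u) = (some u, some w) := by
  induction w with
  | leaf => rw [lprod, graft1, cut_node_of_le leaf le_rfl, cut_leavesCount]; rfl
  | node x y ih =>
    change (node (lprod u x) y).cut _ = _
    rw [cut_node_of_le y (by rw [leavesCount_lprod]; omega), ih]
    rfl

def optLeavesCount : Option PBT → ℕ
  | none => 0
  | some t => leavesCount t

lemma optLeavesCount_ovee (x y : Option PBT) :
    optLeavesCount (ovee x y) = optLeavesCount x + optLeavesCount y := by
  rcases x with _ | x <;> rcases y with _ | y <;> simp [ovee, optLeavesCount, leavesCount]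

lemma optLeavesCount_cut (s : PBT) (i : ℕ) :
    optLeavesCount (s.cut i).1 = min i (leavesCount s) ∧
      optLeavesCount (s.cut i).2 = leavesCount s - i := by
  induction s generalizing i with
  | leaf => rcases i with _ | i <;> simp [cut, optLeavesCount, leavesCount]
  | node a b iha ihb =>
    simp only [leavesCount]
    by_cases h : i ≤ leavesCount a
    · rw [cut_node_of_le b h, optLeavesCount_ovee, (iha i).1, (iha i).2]
      exact ⟨by omega, by simp only [optLeavesCount]; omega⟩
    · rw [cut_node_of_lt b (not_le.1 h), optLeavesCount_ovee, (ihb _).1, (ihb _).2]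
      exact ⟨by simp only [optLeavesCount]; omega, by omega⟩

lemma leavesCount_of_cut_eq {s u w : PBT} {i : ℕ} (h : s.cut i = (some u, some w)) :
    leavesCount u = i ∧ leavesCount u + leavesCount w = leavesCount s := by
  obtain ⟨h₁, h₂⟩ := optLeavesCount_cut s i
  rw [h] at h₁ h₂
  have := one_le_leavesCount w
  simp only [optLeavesCount] at h₁ h₂
  omega

end Cut

section CutMonotone

open PBT

local notation:50 x:51 " ≼ " y:51 => Option.Rel (· ≤ ·) x y

lemma optRel_refl (x : Option PBT) : x ≼ x := by
  cases x <;> constructor; rfl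

lemma optRel_trans {x y z : Option PBT} (hxy : x ≼ y) (hyz : y ≼ z) : x ≼ z := by
  cases hxy <;> cases hyz <;> constructor; exact le_trans ‹_› ‹_›

lemma ovee_rel_ovee {x x' y y' : Option PBT} (hx : x ≼ x') (hy : y ≼ y') :
    ovee x y ≼ ovee x' y' := by
  cases hx <;> cases hy <;> constructor <;> first | assumption | exact node_le_node ‹_› ‹_›

lemma ovee_ovee_rel (x y z : Option PBT) : ovee (ovee x y) z ≼ ovee x (ovee y z) := by
  rcases x with _ | x <;> rcases y with _ | y <;> rcases z with _ | z <;>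
    first | exact optRel_refl _ | exact .some (TStep.rot x y z).le

lemma TStep.cut_rel {s s' : PBT} (h : TStep s s') (i : ℕ) :
    (s.cut i).1 ≼ (s'.cut i).1 ∧ (s.cut i).2 ≼ (s'.cut i).2 := by
  induction h generalizing i with
  | rot a b c =>
    rcases le_or_gt i (leavesCount a) with h₁ | h₁
    · rw [cut_node_of_le c (by simp only [leavesCount]; omega), cut_node_of_le b h₁,
        cut_node_of_le (node b c) h₁]
      exact ⟨optRel_refl _, ovee_ovee_rel _ (some b) (some c)⟩
    rcases le_or_gt i (leavesCount a + leavesCount b) with h₂ | h₂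
    · rw [cut_node_of_le c h₂, cut_node_of_lt b h₁, cut_node_of_lt (node b c) h₁,
        cut_node_of_le c (by omega)]
      exact ⟨optRel_refl _, optRel_refl _⟩
    · rw [cut_node_of_lt c h₂, cut_node_of_lt (node b c) h₁, cut_node_of_lt c (by omega),
        Nat.sub_sub]
      exact ⟨ovee_ovee_rel (some a) (some b) _, optRel_refl _⟩
  | @left a a' c h ih =>
    rcases le_or_gt i (leavesCount a) with h₁ | h₁
    · rw [cut_node_of_le c h₁, cut_node_of_le c (h.leavesCount_eq ▸ h₁)]
      exact ⟨(ih i).1, ovee_rel_ovee (ih i).2 (optRel_refl _)⟩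
    · rw [cut_node_of_lt c h₁, cut_node_of_lt c (h.leavesCount_eq ▸ h₁), h.leavesCount_eq]
      exact ⟨ovee_rel_ovee (.some h.le) (optRel_refl _), optRel_refl _⟩
  | right a h ih =>
    rcases le_or_gt i (leavesCount a) with h₁ | h₁
    · rw [cut_node_of_le _ h₁, cut_node_of_le _ h₁]
      exact ⟨optRel_refl _, ovee_rel_ovee (optRel_refl _) (.some h.le)⟩
    · rw [cut_node_of_lt _ h₁, cut_node_of_lt _ h₁]
      exact ⟨ovee_rel_ovee (optRel_refl _) (ih _).1, (ih _).2⟩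

lemma cut_rel_of_le {s s' : PBT} (h : s ≤ s') (i : ℕ) :
    (s.cut i).1 ≼ (s'.cut i).1 ∧ (s.cut i).2 ≼ (s'.cut i).2 := by
  induction h with
  | refl => exact ⟨optRel_refl _, optRel_refl _⟩
  | tail _ hstep ih =>
    exact ⟨optRel_trans ih.1 (hstep.cut_rel i).1, optRel_trans ih.2 (hstep.cut_rel i).2⟩

end CutMonotone

section CutGalois

open PBT

lemma cut_fst_of_snd_eq_none {s : PBT} {i : ℕ} (h : (s.cut i).2 = none) :
    (s.cut i).1 = some s := by
  induction s generalizing i with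
  | leaf => rcases i with _ | i <;> simp_all [cut]
  | node a b _ ihb =>
    by_cases h₁ : i ≤ leavesCount a
    · rw [cut_node_of_le b h₁] at h
      rcases hc : (a.cut i).2 <;> simp [hc, ovee] at h
    · rw [cut_node_of_lt b (not_le.1 h₁)] at h ⊢
      rw [ihb h]
      rfl

lemma cut_snd_of_fst_eq_none {s : PBT} {i : ℕ} (h : (s.cut i).1 = none) :
    (s.cut i).2 = some s := by
  induction s generalizing i with
  | leaf => rcases i with _ | i <;> simp_all [cut]
  | node a b iha _ =>
    by_cases h₁ : i ≤ leavesCount a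
    · rw [cut_node_of_le b h₁] at h ⊢
      rw [iha h]
      rfl
    · rw [cut_node_of_lt b (not_le.1 h₁)] at h
      rcases hc : (b.cut (i - leavesCount a)).1 <;> simp [hc, ovee] at h

lemma lprod_le_of_cut_eq {s u w : PBT} {i : ℕ} (h : s.cut i = (some u, some w)) :
    lprod u w ≤ s := by
  induction s generalizing i u w with
  | leaf => rcases i with _ | i <;> simp [cut] at h
  | node a b iha ihb =>
    by_cases h₁ : i ≤ leavesCount a
    · rw [cut_node_of_le b h₁] at h
      rcases hc : a.cut i with ⟨x, _ | y⟩ <;> rw [hc] at h <;>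
        simp only [ovee, Prod.mk.injEq, Option.some.injEq] at h <;> obtain ⟨rfl, rfl⟩ := h
      · cases (cut_fst_of_snd_eq_none (congrArg Prod.snd hc)).symm.trans (congrArg Prod.fst hc)
        exact lprod_le_node _ _
      · exact node_le_node (iha hc) le_rfl
    · rw [cut_node_of_lt b (not_le.1 h₁)] at h
      rcases hc : b.cut (i - leavesCount a) with ⟨_ | x, y⟩ <;> rw [hc] at h <;>
        simp only [ovee, Prod.mk.injEq, Option.some.injEq] at h <;> obtain ⟨rfl, rfl⟩ := h
      · cases (cut_snd_of_fst_eq_none (congrArg Prod.fst hc)).symm.trans (congrArg Prod.snd hc)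
        exact lprod_le_node _ _
      · exact (lprod_node_left_le _ _ _).trans (node_le_node le_rfl (ihb hc))

lemma lprod_le_iff {u w s : PBT} : lprod u w ≤ s ↔
    ∃ u' w', s.cut (leavesCount u) = (some u', some w') ∧ u ≤ u' ∧ w ≤ w' := by
  constructor
  · intro h
    have hrel := cut_rel_of_le h (leavesCount u)
    rw [cut_lprod] at hrel
    generalize s.cut (leavesCount u) = p at hrel
    obtain ⟨x, y⟩ := p
    obtain ⟨⟨hu⟩, ⟨hw⟩⟩ := hrel
    exact ⟨_, _, rfl, hu, hw⟩
  · rintro ⟨u', w', h, hu, hw⟩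
    exact (lprod_mono hu hw).trans (lprod_le_of_cut_eq h)

end CutGalois

section Coproduct

open PBT Finsupp Finset

lemma D0_eq_sum_cut (s : PBT) :
    D0 s = ∑ i ∈ range (leavesCount s + 1), single (s.cut i) 1 := by
  induction s with
  | leaf => simp only [D0, leavesCount, sum_range_succ, sum_range_zero, zero_add]; rfl
  | node t w iht ihw =>
    rw [D0, sum_smul_single_one_eq_mapDomain, sum_smul_single_one_eq_mapDomain, iht, ihw,
      mapDomain_finsetSum, mapDomain_finsetSum, sum_range_succ' _ (leavesCount w)]
    simp only [mapDomain_single]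
    have hleft : ∀ i ∈ range (leavesCount t + 1),
        single ((t.cut i).1, ovee (t.cut i).2 (some w)) (1 : ℤ) = single ((node t w).cut i) 1 :=
      fun i hi => by rw [cut_node_of_le w (Nat.lt_succ_iff.1 (mem_range.1 hi))]
    have hright : ∀ j ∈ range (leavesCount w),
        single (ovee (some t) (w.cut (j + 1)).1, (w.cut (j + 1)).2) (1 : ℤ) =
          single ((node t w).cut (leavesCount t + 1 + j)) 1 := fun j _ => by
      rw [cut_node_of_lt w (by omega), show leavesCount t + 1 + j - leavesCount t = j + 1 by omega]
    rw [sum_congr rfl hleft, sum_congr rfl hright, cut_zero]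
    change _ + (_ + single (some t, some w) 1) - _ = _
    rw [← add_assoc, add_sub_cancel_right, ← sum_range_add,
      show leavesCount t + 1 + leavesCount w = leavesCount (node t w) + 1 by
        simp only [leavesCount]; ring]

noncomputable def PBT.reducedCoproduct (s : PBT) : (Option PBT × Option PBT) →₀ ℤ :=
  ∑ i ∈ Ico 1 (leavesCount s), single (s.cut i) 1

lemma D0_eq (s : PBT) :
    D0 s = single (none, some s) 1 + single (some s, none) 1 + s.reducedCoproduct := by
  have := one_le_leavesCount s
  rw [D0_eq_sum_cut, range_eq_Ico, sum_eq_sum_Ico_succ_bot (by omega),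
    sum_Ico_succ_top (by omega), cut_zero, cut_leavesCount, reducedCoproduct]
  abel

lemma Dhat_mapDomain_some (v : PBT →₀ ℤ) :
    Dhat (mapDomain some v) =
      mapDomain (fun y => ((none : Option PBT), y)) (mapDomain some v) +
        mapDomain (fun y => (y, (none : Option PBT))) (mapDomain some v) +
        linearCombination ℤ reducedCoproduct v := by
  rw [Dhat, sum_mapDomain_index (h := fun x a => a • D x) (fun _ => zero_smul ℤ _)
      fun _ _ _ => add_smul _ _ _,
    ← mapDomain_comp, ← mapDomain_comp, ← sum_smul_single_one_eq_mapDomain,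
    ← sum_smul_single_one_eq_mapDomain, linearCombination_apply, ← Finsupp.sum_add,
    ← Finsupp.sum_add]
  exact Finsupp.sum_congr fun s _ => by rw [D, D0_eq, smul_add, smul_add]; rfl

lemma reducedCoproduct_apply_of_none (s : PBT) {q : Option PBT × Option PBT}
    (hq : q.1 = none ∨ q.2 = none) : s.reducedCoproduct q = 0 := by
  rw [reducedCoproduct, finsetSum_apply]
  refine sum_eq_zero fun i hi => single_eq_of_ne ?_
  rintro rfl
  obtain ⟨h₁, h₂⟩ := optLeavesCount_cut s i
  have := mem_Ico.1 hi
  rcases hq with hq | hq <;> simp only [hq, optLeavesCount] at h₁ h₂ <;> omega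

lemma reducedCoproduct_apply_some (s u w : PBT) :
    s.reducedCoproduct (some u, some w) =
      if s.cut (leavesCount u) = (some u, some w) then 1 else 0 := by
  rw [reducedCoproduct, finsetSum_apply]
  split_ifs with h
  · obtain ⟨-, hsum⟩ := leavesCount_of_cut_eq h
    have := one_le_leavesCount u
    have := one_le_leavesCount w
    rw [sum_eq_single_of_mem (leavesCount u) (mem_Ico.2 ⟨by omega, by omega⟩), h,
      single_eq_same]
    rintro i - hi
    exact single_eq_of_ne fun hc => hi ((leavesCount_of_cut_eq hc.symm).1.symm)
  · refine sum_eq_zero fun i _ => single_eq_of_ne fun hc => h ?_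
    rw [(leavesCount_of_cut_eq hc.symm).1]
    exact hc.symm

lemma linearCombination_reducedCoproduct_eq_zero_iff (v : PBT →₀ ℤ) :
    linearCombination ℤ reducedCoproduct v = 0 ↔
      ∀ p : PBT × PBT, linearCombination ℤ reducedCoproduct v (some p.1, some p.2) = 0 := by
  refine ⟨fun h p => by rw [h, Finsupp.zero_apply], fun h => ?_⟩
  ext q
  by_cases hq : q.1 = none ∨ q.2 = none
  · rw [linearCombination_apply, Finsupp.sum_apply, Finsupp.zero_apply]
    exact Finset.sum_eq_zero fun s _ => by
      simp only [Finsupp.smul_apply, reducedCoproduct_apply_of_none s hq, smul_zero]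
  · obtain ⟨u, w, rfl⟩ : ∃ u w, q = (Option.some u, Option.some w) := by
      rcases q with ⟨_ | u, _ | w⟩ <;> simp_all
    exact h (u, w)

end Coproduct

section UpperSums

open PBT Finsupp Finset

lemma sum_Ici_reducedCoproduct_apply (s : PBT) (p : PBT × PBT) :
    ∑ q ∈ Ici p, s.reducedCoproduct (some q.1, some q.2) =
      if lprod p.1 p.2 ≤ s then 1 else 0 := by
  have hcount : ∀ q ∈ Ici p, leavesCount q.1 = leavesCount p.1 := fun q hq =>
    (leavesCount_eq_of_le (mem_Ici.1 hq).1).symm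
  simp only [reducedCoproduct_apply_some]
  split_ifs with h
  · obtain ⟨u, w, hcut, hu, hw⟩ := lprod_le_iff.1 h
    have huw : (u, w) ∈ Ici p := mem_Ici.2 ⟨hu, hw⟩
    rw [sum_eq_single_of_mem (u, w) huw, if_pos (by rwa [hcount _ huw])]
    intro q hq hne
    rw [if_neg]
    intro hq'
    rw [hcount q hq, hcut] at hq'
    simp only [Prod.mk.injEq, Option.some.injEq] at hq'
    exact hne (Prod.ext hq'.1.symm hq'.2.symm)
  · refine sum_eq_zero fun q hq => if_neg fun hq' => h ?_
    exact lprod_le_iff.2 ⟨q.1, q.2, by rwa [← hcount q hq], mem_Ici.1 hq⟩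

lemma sum_Ici_linearCombination_reducedCoproduct_apply (v : PBT →₀ ℤ) (p : PBT × PBT) :
    ∑ q ∈ Ici p, linearCombination ℤ reducedCoproduct v (some q.1, some q.2) =
      v.sum fun s a => if lprod p.1 p.2 ≤ s then a else 0 := by
  simp only [linearCombination_apply, Finsupp.sum, finsetSum_apply, Finsupp.smul_apply,
    smul_eq_mul]
  rw [Finset.sum_comm]
  refine sum_congr rfl fun s _ => ?_
  rw [← Finset.mul_sum, sum_Ici_reducedCoproduct_apply, mul_ite, mul_one, mul_zero]

end UpperSums

/-- `M_t` is primitive for `Δ` (the reduced coproduct vanishes on `M_t`,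
i.e. `Δ(M_t) = 1 ⊗ M_t + M_t ⊗ 1`) if and only if `t` is `⋋`-irreducible. -/
theorem stmt17
    (μ : PBT → PBT → ℤ) (M : PBT → (PBT →₀ ℤ))
    (hM : ∀ t w : PBT, M t w = μ w t)
    (hμrefl : ∀ t : PBT, μ t t = 1)
    (hμzero : ∀ w t : PBT, ¬ tle w t → μ w t = 0)
    (hμsum : ∀ w t : PBT, tle w t → w ≠ t →
      (∑ᶠ z : PBT, if tle w z ∧ tle z t then μ z t else 0) = 0)
    (t : PBT) :
    (Dhat (Finsupp.mapDomain some (M t)) =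
        Finsupp.mapDomain (fun y => ((none : Option PBT), y))
          (Finsupp.mapDomain some (M t)) +
        Finsupp.mapDomain (fun y => (y, (none : Option PBT)))
          (Finsupp.mapDomain some (M t))) ↔ Irr t := by
  rw [Dhat_mapDomain_some, add_eq_left, linearCombination_reducedCoproduct_eq_zero_iff]
  have upper_sum (p : PBT × PBT) :
      ∑ q ∈ Finset.Ici p,
          Finsupp.linearCombination ℤ PBT.reducedCoproduct (M t) (some q.1, some q.2) =
        if lprod p.1 p.2 = t then 1 else 0 := by
    rw [sum_Ici_linearCombination_reducedCoproduct_apply,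
      sum_ite_le_eq_ite_of_mobius hμrefl hμzero hμsum _ (hM t)]
  constructor
  · rintro h ⟨u, w, rfl⟩
    simpa [h] using upper_sum (u, w)
  · intro hIrr
    exact eq_zero_of_forall_sum_Ici_eq_zero fun p =>
      (upper_sum p).trans (if_neg fun h => hIrr ⟨p.1, p.2, h.symm⟩)
end

section
/- The coproduct Δ_R on the vector space spanned by all reflexive integer relations, defined by Δ_R(R) = Σ_{i=0}^{n} R|_{[i]} ⊗ R|_{{i+1,…,n}} for R of size n, is coassociative, and for each of the associative products ★ ∈ {⊔, ↑, ↓, ↕} the pair (★, Δ_R) satisfies the unital infinitesimal relation: Δ_R(P ★ Q) = Σ P₍₁₎ ⊗ (P₍₂₎ ★ Q) + Σ (P ★ Q₍₁₎) ⊗ Q₍₂₎ − P ⊗ Q. -/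
/-! Restricting to an initial or final segment composes like intersecting intervals, so both
iterated coproducts of `R` equal the sum over all pairs of cuts `j ≤ i` of
`R|[j] ⊗ R|(j,i] ⊗ R|(i,n]`. For `P ★ Q` of size `p + q`, a cut at `k ≤ p` splits only `P`,
giving `P|[k] ⊗ (P|(k,p] ★ Q)`, and a cut at `k ≥ p` splits only `Q`, giving
`(P ★ Q|[k-p]) ⊗ Q|(k-p,q]`; the cut `k = p` occurs in both sums, whence the term
`- P ⊗ Q`. -/

/-- An integer relation: a reflexive binary relation on `{0, 1, …, n−1}`
(representing `[n] = {1,…,n}`). -/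
structure IntRel where
  n : ℕ
  rel : ℕ → ℕ → Prop
  dom : ∀ i j, rel i j → i < n ∧ j < n
  refl : ∀ i, i < n → rel i i

/-- The four products `⊔, ↑, ↓, ↕` on integer relations: `glue up down R Q`
places `R` and `Q` side by side; if `up = true` it also adds all pairs `(i, j)`
with `i` in the `R`-block and `j` in the `Q`-block, and if `down = true` all
pairs `(j, i)` with `i` in the `R`-block and `j` in the `Q`-block.
Thus `⊔ = glue false false`, `↑ = glue true false`, `↓ = glue false true`
and `↕ = glue true true`. -/
def glue (up down : Bool) (R Q : IntRel) : IntRel where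
  n := R.n + Q.n
  rel i j := R.rel i j ∨ (R.n ≤ i ∧ R.n ≤ j ∧ Q.rel (i - R.n) (j - R.n)) ∨
    (up = true ∧ i < R.n ∧ R.n ≤ j ∧ j < R.n + Q.n) ∨
    (down = true ∧ j < R.n ∧ R.n ≤ i ∧ i < R.n + Q.n)
  dom := by
    intro i j h
    rcases h with h | ⟨hi, hj, h⟩ | ⟨_, h1, h2, h3⟩ | ⟨_, h1, h2, h3⟩
    · have := R.dom i j h; omega
    · have := Q.dom _ _ h; omega
    · omega
    · omega
  refl := by
    intro i hi
    by_cases h : i < R.n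
    · exact Or.inl (R.refl i h)
    · exact Or.inr (Or.inl ⟨by omega, by omega, Q.refl _ (by omega)⟩)

/-- The restriction of `R` to the initial segment `{0,…,k−1}`. -/
def restLe (R : IntRel) (k : ℕ) : IntRel where
  n := min k R.n
  rel i j := i < k ∧ j < k ∧ R.rel i j
  dom := by
    rintro i j ⟨h1, h2, h⟩
    have := R.dom i j h
    omega
  refl := by
    intro i hi
    exact ⟨by omega, by omega, R.refl i (by omega)⟩

/-- The restriction of `R` to `{k, k+1, …, n−1}`, renumbered from `0`. -/
def restGe (R : IntRel) (k : ℕ) : IntRel where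
  n := R.n - k
  rel i j := R.rel (i + k) (j + k)
  dom := by
    intro i j h
    have := R.dom _ _ h
    omega
  refl := by
    intro i hi
    exact R.refl _ (by omega)

/-- The coproduct `Δ_R(R) = Σ_{i=0}^{n} R|_{[i]} ⊗ R|_{{i+1,…,n}}`, valued in
the free module on pairs of integer relations. -/
noncomputable def coR (R : IntRel) : (IntRel × IntRel) →₀ ℤ :=
  ∑ i ∈ Finset.range (R.n + 1), Finsupp.single (restLe R i, restGe R i) 1

open Finset

@[ext]
theorem IntRel.ext {R S : IntRel} (hn : R.n = S.n) (hrel : ∀ i j, R.rel i j ↔ S.rel i j) :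
    R = S := by
  obtain ⟨n, rel, _, _⟩ := R
  obtain ⟨_, _, _, _⟩ := S
  subst hn
  obtain rfl : rel = _ := funext₂ fun i j => propext (hrel i j)
  rfl

theorem coR_sum_smul {M : Type*} [AddCommGroup M] (R : IntRel) (g : IntRel × IntRel → M) :
    ((coR R).sum fun p a => a • g p) = ∑ i ∈ range (R.n + 1), g (restLe R i, restGe R i) := by
  rw [coR, ← Finsupp.sum_finsetSum_index (h := fun p a => a • g p) (fun _ => zero_smul ℤ _)
    fun _ _ _ => add_smul ..]
  simp only [Finsupp.sum_single_index, zero_smul, one_smul]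

section Restriction

variable (R : IntRel)

theorem restLe_restLe {i j : ℕ} (hj : j ≤ i) : restLe (restLe R i) j = restLe R j := by
  ext a b
  · simp only [restLe]; omega
  · simp only [restLe]; grind

theorem restGe_restLe (i j : ℕ) : restGe (restLe R i) j = restLe (restGe R j) (i - j) := by
  ext a b
  · simp only [restLe, restGe]; omega
  · simp only [restLe, restGe]; grind

theorem restGe_restGe (i j : ℕ) : restGe (restGe R i) j = restGe R (i + j) := by
  ext a b
  · simp only [restGe]; omega
  · simp only [restGe]; grind

theorem restGe_zero : restGe R 0 = R := by
  ext <;> simp [restGe]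

end Restriction

section Glue

variable (up down : Bool) (P Q : IntRel)

theorem glue_restLe_zero : glue up down P (restLe Q 0) = P := by
  ext a b
  · simp [glue, restLe]
  · simp only [glue, restLe]; grind

theorem restLe_glue_of_le {k : ℕ} (hk : k ≤ P.n) :
    restLe (glue up down P Q) k = restLe P k := by
  ext a b
  · simp only [glue, restLe]; omega
  · simp only [glue, restLe]; grind

theorem restGe_glue_of_le {k : ℕ} (hk : k ≤ P.n) :
    restGe (glue up down P Q) k = glue up down (restGe P k) Q := by
  ext a b
  · simp only [glue, restGe]; omega
  · simp only [glue, restGe]; grind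

theorem restLe_glue_of_ge {k : ℕ} (hk₁ : P.n ≤ k) (hk₂ : k ≤ P.n + Q.n) :
    restLe (glue up down P Q) k = glue up down P (restLe Q (k - P.n)) := by
  ext a b
  · simp only [glue, restLe]; omega
  · simp only [glue, restLe]; grind [P.dom]

theorem restGe_glue_of_ge {k : ℕ} (hk : P.n ≤ k) :
    restGe (glue up down P Q) k = restGe Q (k - P.n) := by
  ext a b
  · simp only [glue, restGe]; omega
  · simp only [glue, restGe]; grind [P.dom]

end Glue

theorem coR_coassoc (R : IntRel) :
    ((coR R).sum fun p a =>
        a • ((coR p.1).sum fun q b => b • Finsupp.single (q.1, q.2, p.2) (1 : ℤ))) =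
      ((coR R).sum fun p a =>
        a • ((coR p.2).sum fun q b => b • Finsupp.single (p.1, q.1, q.2) (1 : ℤ))) := by
  simp only [coR_sum_smul]
  set T : ℕ → ℕ → IntRel × IntRel × IntRel →₀ ℤ := fun j i =>
    Finsupp.single (restLe R j, restLe (restGe R j) (i - j), restGe R i) 1
  calc _ = ∑ i ∈ range (R.n + 1), ∑ j ∈ range (i + 1), T j i := by
        refine sum_congr rfl fun i hi => ?_
        have hi : i ≤ R.n := Nat.lt_succ_iff.mp (mem_range.mp hi)
        rw [show (restLe R i).n = i from min_eq_left hi]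
        refine sum_congr rfl fun j hj => ?_
        rw [restLe_restLe R (Nat.lt_succ_iff.mp (mem_range.mp hj)), restGe_restLe]
    _ = ∑ j ∈ range (R.n + 1), ∑ i ∈ Ico j (R.n + 1), T j i :=
        sum_comm' fun i j => by simp only [mem_range, mem_Ico]; omega
    _ = _ := by
        refine sum_congr rfl fun j hj => ?_
        have hj : j ≤ R.n := Nat.lt_succ_iff.mp (mem_range.mp hj)
        rw [sum_Ico_eq_sum_range,
          show R.n + 1 - j = (restGe R j).n + 1 by simp only [restGe]; omega]
        refine sum_congr rfl fun k _ => ?_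
        simp only [T, restGe_restGe, Nat.add_sub_cancel_left]

theorem coR_glue (up down : Bool) (P Q : IntRel) :
    coR (glue up down P Q) =
      ((coR P).sum fun p a => a • Finsupp.single (p.1, glue up down p.2 Q) (1 : ℤ)) +
      ((coR Q).sum fun p a => a • Finsupp.single (glue up down P p.1, p.2) (1 : ℤ)) -
      Finsupp.single (P, Q) 1 := by
  rw [coR_sum_smul, coR_sum_smul, eq_sub_iff_add_eq, coR,
    show (glue up down P Q).n + 1 = P.n + 1 + Q.n by simp only [glue]; omega, sum_range_add,
    sum_range_succ' _ Q.n, glue_restLe_zero, restGe_zero, add_assoc]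
  dsimp only
  congr 1
  · refine sum_congr rfl fun k hk => ?_
    have hk : k ≤ P.n := Nat.lt_succ_iff.mp (mem_range.mp hk)
    rw [restLe_glue_of_le up down P Q hk, restGe_glue_of_le up down P Q hk]
  · congr 1
    refine sum_congr rfl fun j hj => ?_
    have hj : j < Q.n := mem_range.mp hj
    rw [restLe_glue_of_ge up down P Q (by omega) (by omega),
      restGe_glue_of_ge up down P Q (by omega), show P.n + 1 + j - P.n = j + 1 by omega]

/-- The coproduct `Δ_R` is coassociative, and for each of the four products
`★ ∈ {⊔, ↑, ↓, ↕}` the unital infinitesimal relation holds: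
`Δ_R(P ★ Q) = Σ P₍₁₎ ⊗ (P₍₂₎ ★ Q) + Σ (P ★ Q₍₁₎) ⊗ Q₍₂₎ − P ⊗ Q`. -/
theorem stmt19 :
    (∀ R : IntRel,
      ((coR R).sum fun p a =>
          a • ((coR p.1).sum fun q b => b • Finsupp.single (q.1, q.2, p.2) (1 : ℤ))) =
      ((coR R).sum fun p a =>
          a • ((coR p.2).sum fun q b => b • Finsupp.single (p.1, q.1, q.2) (1 : ℤ)))) ∧
    (∀ (up down : Bool) (P Q : IntRel),
      coR (glue up down P Q) =
        ((coR P).sum fun p a => a • Finsupp.single (p.1, glue up down p.2 Q) (1 : ℤ)) +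
        ((coR Q).sum fun p a => a • Finsupp.single (glue up down P p.1, p.2) (1 : ℤ)) -
        Finsupp.single (P, Q) 1) :=
  ⟨coR_coassoc, coR_glue⟩
end
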